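/- Let L be a real N×N lower-triangular matrix whose columns all have unit ℓ₂-norm, and suppose Lᵀ L = s sᵀ for some s ∈ {−1,+1}^N. Then the last row of L equals ε s for some sign ε ∈ {−1,+1}; in particular, the signs of the entries of the last row of L recover s up to a global sign. -/
import Mathlib


open Matrix

/-- If `L` is lower triangular with unit-norm columns and `Lᵀ L = s sᵀ` for
some `s ∈ {−1,+1}^N`, then the last row of `L` equals `ε s` for a global sign
`ε ∈ {−1,+1}`; i.e., the signs of the last row of `L` recover `s` up to sign. -/
theorem last_row_recovers_sign_vector {N : ℕ}
    (L : Matrix (Fin (N + 1)) (Fin (N + 1)) ℝ)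
    (hlt : ∀ i j : Fin (N + 1), i < j → L i j = 0)
    (hcols : ∀ k : Fin (N + 1), Real.sqrt (∑ i, (L i k) ^ 2) = 1)
    (s : Fin (N + 1) → ℝ) (hs : ∀ i, s i = 1 ∨ s i = -1)
    (hfact : Lᵀ * L = Matrix.vecMulVec s s) :
    ∃ ε : ℝ, (ε = 1 ∨ ε = -1) ∧ ∀ j, L (Fin.last N) j = ε * s j := by
  set a := L (Fin.last N) (Fin.last N) with ha_def
  have hcol0 : ∀ i, i ≠ Fin.last N → L i (Fin.last N) = 0 := by
    intro i hi
    exact hlt i (Fin.last N) (lt_of_le_of_ne (Fin.le_last i) hi)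
  have hsum : ∀ j, (∑ i, L i (Fin.last N) * L i j) = a * L (Fin.last N) j := by
    intro j
    rw [Finset.sum_eq_single (Fin.last N)]
    · intro b _ hb; rw [hcol0 b hb, zero_mul]
    · intro h; exact absurd (Finset.mem_univ _) h
  have hsq : a ^ 2 = 1 := by
    have h := hcols (Fin.last N)
    have hsum2 : (∑ i, (L i (Fin.last N)) ^ 2) = a ^ 2 := by
      rw [Finset.sum_eq_single (Fin.last N)]
      · intro b _ hb; rw [hcol0 b hb]; ring
      · intro h; exact absurd (Finset.mem_univ _) h
    rw [hsum2] at h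
    have hnn : (0:ℝ) ≤ a ^ 2 := sq_nonneg a
    have := Real.sqrt_eq_one.mp h
    linarith
  have ha1 : a = 1 ∨ a = -1 := by
    have h0 : (a - 1) * (a + 1) = 0 := by nlinarith
    rcases mul_eq_zero.mp h0 with h | h
    · left; linarith
    · right; linarith
  refine ⟨a * s (Fin.last N), ?_, ?_⟩
  · rcases ha1 with h | h <;> rcases hs (Fin.last N) with h' | h' <;>
      simp [h, h']
  · intro j
    have hent := congrFun (congrFun hfact (Fin.last N)) j
    simp only [Matrix.mul_apply, Matrix.transpose_apply, Matrix.vecMulVec_apply] at hent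
    rw [hsum j] at hent
    have : a * (a * L (Fin.last N) j) = a * (s (Fin.last N) * s j) := by rw [hent]
    calc L (Fin.last N) j = a ^ 2 * L (Fin.last N) j := by rw [hsq]; ring
      _ = a * (s (Fin.last N) * s j) := by rw [← this]; ring
      _ = a * s (Fin.last N) * s j := by ring
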